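/- Let P = (C, w, ≁) be a polymer model with finite partition function, let {Λ_i}_{i∈[m]} be a polymer clique cover of size m, and define U_0 = ∅ and U_i = U_{i-1} ∪ Λ_i for i ∈ [m]. Then for every i ∈ [m], Z_{U_{i-1}} ≤ Z_{U_i} ≤ Z_{U_{i-1}} · Z_{Λ_i}; in particular, with ρ_i = Z_{U_{i-1}}/Z_{U_i}, it holds that 1/Z_{Λ_i} ≤ ρ_i ≤ 1. -/

import Mathlib

open scoped ENNReal Classical

/-- An abstract polymer model: a set `C` of polymers with positive real weights and a
reflexive, symmetric incompatibility relation. -/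
structure PolymerModel (C : Type*) where
  w : C → ℝ
  w_pos : ∀ γ, 0 < w γ
  incomp : C → C → Prop
  incomp_refl : ∀ γ, incomp γ γ
  incomp_symm : ∀ γ γ', incomp γ γ' → incomp γ' γ

namespace PolymerModel

variable {C : Type*}

/-- A polymer family: a finite set of pairwise compatible polymers. -/
def IsFamily (P : PolymerModel C) (Γ : Finset C) : Prop :=
  ∀ γ ∈ Γ, ∀ γ' ∈ Γ, γ ≠ γ' → ¬P.incomp γ γ'

/-- A polymer clique: a set of pairwise incompatible polymers. -/
def IsClique (P : PolymerModel C) (Λ : Set C) : Prop :=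
  ∀ γ ∈ Λ, ∀ γ' ∈ Λ, P.incomp γ γ'

/-- The partition function restricted to `B`:
`Z_B = ∑_{Γ ∈ F_B} ∏_{γ ∈ Γ} w_γ` (valued in `ℝ≥0∞`). -/
noncomputable def Z (P : PolymerModel C) (B : Set C) : ℝ≥0∞ :=
  ∑' Γ : {Γ : Finset C // P.IsFamily Γ ∧ ↑Γ ⊆ B}, ∏ γ ∈ Γ.1, ENNReal.ofReal (P.w γ)

/-- The Gibbs distribution restricted to `B`, regarded as a distribution on all finite
sets of polymers (assigning `0` outside `F_B`). -/
noncomputable def gibbs (P : PolymerModel C) (B : Set C) (Γ : Finset C) : ℝ≥0∞ :=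
  if P.IsFamily Γ ∧ ↑Γ ⊆ B then (∏ γ ∈ Γ, ENNReal.ofReal (P.w γ)) / P.Z B else 0

/-- The clique dynamics condition for a function `f : C → ℝ_{>0}`:
for all `γ`, `∑_{γ' ≁ γ, γ' ≠ γ} f(γ') w_{γ'}/(1 + w_{γ'}) ≤ f(γ)`. -/
def CliqueDynamicsCondition (P : PolymerModel C) (f : C → ℝ) : Prop :=
  ∀ γ : C,
    ∑' γ' : {γ' : C // P.incomp γ' γ ∧ γ' ≠ γ},
        ENNReal.ofReal (f γ' * P.w γ' / (1 + P.w γ')) ≤ ENNReal.ofReal (f γ)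

/-- Total variation distance between two distributions on finite sets of polymers. -/
noncomputable def dTV (μ ν : Finset C → ℝ≥0∞) : ℝ≥0∞ :=
  (∑' Γ : Finset C, ((μ Γ - ν Γ) + (ν Γ - μ Γ))) / 2

end PolymerModel

/-! Adding polymers can only add polymer families, so `Z` is monotone. Conversely, splitting a
family on `A ∪ B` into its polymers in `A` and the rest gives an injective, weight-preserving
map `F_{A ∪ B} → F_A × F_B`, so `Z_{A ∪ B} ≤ Z_A · Z_B`. The bounds on `ρ_i` follow by dividing
by `Z_{U_i}`, which lies in `[1, ∞)` because the empty family has weight `1` and `Z` is finite. -/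

theorem ENNReal.inv_le_div_of_le_mul {a b c : ℝ≥0∞} (hb₀ : b ≠ 0) (hb : b ≠ ∞)
    (h : b ≤ a * c) : c⁻¹ ≤ a / b := by
  rw [ENNReal.le_div_iff_mul_le (.inl hb₀) (.inl hb)]
  calc c⁻¹ * b ≤ c⁻¹ * (a * c) := mul_le_mul_right h _
    _ = a * (c⁻¹ * c) := by ring
    _ ≤ a := mul_le_of_le_one_right' (ENNReal.inv_mul_le_one c)

namespace PolymerModel

variable {C : Type*} (P : PolymerModel C)

/-- `F_B`, the polymer families contained in `B`. -/
abbrev Families (B : Set C) : Type _ := {Γ : Finset C // P.IsFamily Γ ∧ ↑Γ ⊆ B}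

noncomputable abbrev weight (Γ : Finset C) : ℝ≥0∞ := ∏ γ ∈ Γ, ENNReal.ofReal (P.w γ)

theorem Z_eq_tsum_weight (B : Set C) : P.Z B = ∑' Γ : P.Families B, P.weight Γ := rfl

theorem IsFamily.mono {P : PolymerModel C} {Γ Δ : Finset C} (hΓ : P.IsFamily Γ)
    (h : Δ ⊆ Γ) : P.IsFamily Δ :=
  fun γ hγ γ' hγ' => hΓ γ (h hγ) γ' (h hγ')

theorem one_le_Z (B : Set C) : 1 ≤ P.Z B := by
  have hempty : P.IsFamily ∅ ∧ ↑(∅ : Finset C) ⊆ B := ⟨by simp [IsFamily], by simp⟩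
  rw [Z_eq_tsum_weight]
  simpa using ENNReal.le_tsum (f := fun Γ : P.Families B => P.weight Γ) ⟨∅, hempty⟩

theorem Z_ne_zero (B : Set C) : P.Z B ≠ 0 :=
  (zero_lt_one.trans_le (P.one_le_Z B)).ne'

theorem Z_mono {A B : Set C} (h : A ⊆ B) : P.Z A ≤ P.Z B := by
  rw [Z_eq_tsum_weight, Z_eq_tsum_weight]
  exact ENNReal.tsum_mono_subtype P.weight (s := {Γ | P.IsFamily Γ ∧ ↑Γ ⊆ A})
    (t := {Γ | P.IsFamily Γ ∧ ↑Γ ⊆ B}) fun _ hΓ => ⟨hΓ.1, hΓ.2.trans h⟩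

theorem Z_union_le_mul (A B : Set C) : P.Z (A ∪ B) ≤ P.Z A * P.Z B := by
  let split : P.Families (A ∪ B) → P.Families A × P.Families B := fun Γ =>
    (⟨Γ.1.filter (· ∈ A), Γ.2.1.mono (Finset.filter_subset _ _),
        fun _ hγ => (Finset.mem_filter.1 hγ).2⟩,
      ⟨Γ.1.filter (· ∉ A), Γ.2.1.mono (Finset.filter_subset _ _),
        fun _ hγ =>
          (Γ.2.2 (Finset.mem_filter.1 hγ).1).resolve_left (Finset.mem_filter.1 hγ).2⟩)
  have split_injective : Function.Injective split := by
    intro Γ Γ' h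
    apply Subtype.ext
    rw [← Finset.filter_union_filter_not_eq (· ∈ A) Γ.1,
      ← Finset.filter_union_filter_not_eq (· ∈ A) Γ'.1]
    exact congrArg₂ (· ∪ ·) (congrArg (·.1.1) h) (congrArg (·.2.1) h)
  calc P.Z (A ∪ B) = ∑' Γ, P.weight (split Γ).1.1 * P.weight (split Γ).2.1 :=
        tsum_congr fun Γ => (Finset.prod_filter_mul_prod_filter_not Γ.1 (· ∈ A) _).symm
    _ ≤ ∑' p : P.Families A × P.Families B, P.weight p.1.1 * P.weight p.2.1 :=
        ENNReal.tsum_comp_le_tsum_of_injective split_injective _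
    _ = P.Z A * P.Z B := by
        simp_rw [Z_eq_tsum_weight, ENNReal.tsum_prod', ENNReal.tsum_mul_left,
          ENNReal.tsum_mul_right]

end PolymerModel

theorem telescoping_partition_function_bounds_general {C : Type*}
    (P : PolymerModel C) (hZfin : P.Z Set.univ ≠ ⊤)
    {m : ℕ} (Λ : Fin m → Set C)
    (U : ℕ → Set C)
    (hUsucc : ∀ i : Fin m, U (↑i + 1) = U ↑i ∪ Λ i) :
    ∀ i : Fin m,
      (P.Z (U ↑i) ≤ P.Z (U (↑i + 1)) ∧ P.Z (U (↑i + 1)) ≤ P.Z (U ↑i) * P.Z (Λ i)) ∧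
        ((P.Z (Λ i))⁻¹ ≤ P.Z (U ↑i) / P.Z (U (↑i + 1)) ∧
          P.Z (U ↑i) / P.Z (U (↑i + 1)) ≤ 1) := by
  intro i
  have hmono : P.Z (U ↑i) ≤ P.Z (U (↑i + 1)) := by
    rw [hUsucc i]; exact P.Z_mono Set.subset_union_left
  have hsubmul : P.Z (U (↑i + 1)) ≤ P.Z (U ↑i) * P.Z (Λ i) := by
    rw [hUsucc i]; exact P.Z_union_le_mul _ _
  have hfin : P.Z (U (↑i + 1)) ≠ ⊤ := ne_top_of_le_ne_top hZfin (P.Z_mono (Set.subset_univ _))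
  exact ⟨⟨hmono, hsubmul⟩,
    ENNReal.inv_le_div_of_le_mul (P.Z_ne_zero _) hfin hsubmul,
    ENNReal.div_le_of_le_mul (by rwa [one_mul])⟩

/-- With `U_0 = ∅` and `U_i = U_{i-1} ∪ Λ_i`, for every `i ∈ [m]`:
`Z_{U_{i-1}} ≤ Z_{U_i} ≤ Z_{U_{i-1}} · Z_{Λ_i}`, and with `ρ_i = Z_{U_{i-1}}/Z_{U_i}`,
`1/Z_{Λ_i} ≤ ρ_i ≤ 1`. -/
theorem telescoping_partition_function_bounds {C : Type*} [Countable C]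
    (P : PolymerModel C) (hZfin : P.Z Set.univ ≠ ⊤)
    {m : ℕ} (Λ : Fin m → Set C)
    (hclique : ∀ i, P.IsClique (Λ i)) (hcover : (⋃ i, Λ i) = Set.univ)
    (U : ℕ → Set C) (hU0 : U 0 = ∅)
    (hUsucc : ∀ i : Fin m, U (↑i + 1) = U ↑i ∪ Λ i) :
    ∀ i : Fin m,
      (P.Z (U ↑i) ≤ P.Z (U (↑i + 1)) ∧ P.Z (U (↑i + 1)) ≤ P.Z (U ↑i) * P.Z (Λ i)) ∧
        ((P.Z (Λ i))⁻¹ ≤ P.Z (U ↑i) / P.Z (U (↑i + 1)) ∧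
          P.Z (U ↑i) / P.Z (U (↑i + 1)) ≤ 1) :=
  telescoping_partition_function_bounds_general P hZfin Λ U hUsucc
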